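/- Let f₀ : S^{3×3} → ℝ be given by f₀(ε) = (ε₁₃−ε₂₃)² + (ε₁₂−ε₁₃)² + (ε₁₂−ε₂₃)² + ε₁₁² + ε₂₂² + ε₃₃², and let M = {ε ∈ S^{3×3} : |ε| = 1 and ε = a⊙b for some a, b ∈ ℝ³}. Suppose ε̄ ∈ M minimizes f₀ over M, and let a, b ∈ ℝ³ be such that ε̄ = a⊙b. Then: (i) (a_i, b_i) ≠ (0,0) for all i ∈ {1,2,3}, and (ii) (a_i, a_j) ≠ (0,0) and (b_i, b_j) ≠ (0,0) for all i, j ∈ {1,2,3} with i ≠ j. -/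
import Mathlib


open Matrix

/-- The symmetric part `(F + Fᵀ)/2` of a 3×3 matrix. -/
noncomputable def symPart (F : Matrix (Fin 3) (Fin 3) ℝ) : Matrix (Fin 3) (Fin 3) ℝ :=
  (1 / 2 : ℝ) • (F + Fᵀ)

/-- The cofactor matrix: `(cof F)_{ij} = (-1)^{i+j}` times the determinant of the 2×2
matrix obtained from `F` by deleting row `i` and column `j`. -/
noncomputable def cof (F : Matrix (Fin 3) (Fin 3) ℝ) : Matrix (Fin 3) (Fin 3) ℝ :=
  Matrix.of fun i j =>
    (-1 : ℝ) ^ ((i : ℕ) + (j : ℕ)) * (F.submatrix i.succAbove j.succAbove).det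

/-- Frobenius inner product `A:B = Σ_{i,j} A_{ij} B_{ij}` of 3×3 matrices. -/
def mdot (A B : Matrix (Fin 3) (Fin 3) ℝ) : ℝ := ∑ i, ∑ j, A i j * B i j

/-- A function `W : ℝ^{3×3} → ℝ` is polyconvex if there is a convex function
`G : ℝ^{3×3} × ℝ^{3×3} × ℝ → ℝ` with `W F = G (F, cof F, det F)` for all `F`. -/
def Polyconvex3 (W : Matrix (Fin 3) (Fin 3) ℝ → ℝ) : Prop :=
  ∃ G : Matrix (Fin 3) (Fin 3) ℝ × Matrix (Fin 3) (Fin 3) ℝ × ℝ → ℝ,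
    ConvexOn ℝ Set.univ G ∧ ∀ F : Matrix (Fin 3) (Fin 3) ℝ, W F = G (F, cof F, F.det)

/-- `f : S^{3×3} → ℝ` is symmetric polyconvex if `F ↦ f (Fˢ)` is polyconvex. -/
def SymPolyconvex3 (f : Matrix (Fin 3) (Fin 3) ℝ → ℝ) : Prop :=
  Polyconvex3 (fun F => f (symPart F))

/-- `B ∈ S^{3×3}` is negative semi-definite: `Bx·x ≤ 0` for all `x ∈ ℝ³`. -/
def NegSemidefM (B : Matrix (Fin 3) (Fin 3) ℝ) : Prop :=
  ∀ x : Fin 3 → ℝ, B.mulVec x ⬝ᵥ x ≤ 0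

/-- `A ∈ S^{3×3}` is positive semi-definite: `Ax·x ≥ 0` for all `x ∈ ℝ³`. -/
def PosSemidefM (A : Matrix (Fin 3) (Fin 3) ℝ) : Prop :=
  ∀ x : Fin 3 → ℝ, 0 ≤ A.mulVec x ⬝ᵥ x

/-- The symmetrized tensor product `a ⊙ b = (a⊗b + b⊗a)/2`. -/
noncomputable def symProd (a b : Fin 3 → ℝ) : Matrix (Fin 3) (Fin 3) ℝ :=
  (1 / 2 : ℝ) • (vecMulVec a b + vecMulVec b a)

/-- `f : S^{3×3} → ℝ` is symmetric rank-one convex if `t ↦ f (ε + t a⊙b)` is convex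
for every symmetric `ε` and all `a, b ∈ ℝ³`. -/
def SymRankOneConvex3 (f : Matrix (Fin 3) (Fin 3) ℝ → ℝ) : Prop :=
  ∀ ε : Matrix (Fin 3) (Fin 3) ℝ, ε.IsSymm → ∀ a b : Fin 3 → ℝ,
    ConvexOn ℝ Set.univ (fun t : ℝ => f (ε + t • symProd a b))

/-- `f₀(ε) = (ε₁₃−ε₂₃)² + (ε₁₂−ε₁₃)² + (ε₁₂−ε₂₃)² + ε₁₁² + ε₂₂² + ε₃₃²`. -/
noncomputable def f0 (ε : Matrix (Fin 3) (Fin 3) ℝ) : ℝ :=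
  (ε 0 2 - ε 1 2) ^ 2 + (ε 0 1 - ε 0 2) ^ 2 + (ε 0 1 - ε 1 2) ^ 2
    + (ε 0 0) ^ 2 + (ε 1 1) ^ 2 + (ε 2 2) ^ 2

/-- `M = {ε ∈ S^{3×3} : |ε| = 1, ε = a ⊙ b for some a, b ∈ ℝ³}`. -/
noncomputable def Mset : Set (Matrix (Fin 3) (Fin 3) ℝ) :=
  {ε | Real.sqrt (∑ i, ∑ j, (ε i j) ^ 2) = 1 ∧ ∃ a b : Fin 3 → ℝ, ε = symProd a b}


lemma symProd_apply' (a b : Fin 3 → ℝ) (i j : Fin 3) :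
    symProd a b i j = (a i * b j + b i * a j) / 2 := by
  simp [symProd, vecMulVec_apply, Matrix.add_apply, Matrix.smul_apply]
  ring

lemma witness_bound : ∃ ε ∈ Mset, f0 ε = 5/26 := by
  set c := Real.sqrt 117 with hc
  have hcpos : 0 < c := Real.sqrt_pos.mpr (by norm_num)
  have hc2 : c * c = 117 := Real.mul_self_sqrt (by norm_num)
  have hcne : c ≠ 0 := ne_of_gt hcpos
  refine ⟨symProd ![1/c, 1/c, 3/c] ![3,3,0], ⟨?_, ![1/c,1/c,3/c], ![3,3,0], rfl⟩, ?_⟩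
  · have : (∑ i, ∑ j, (symProd ![1/c, 1/c, 3/c] ![3,3,0] i j) ^ 2) = 1 := by
      simp only [Fin.sum_univ_three, symProd_apply']
      simp [Matrix.cons_val_zero, Matrix.cons_val_one]
      field_simp
      linear_combination (-4 : ℝ) * hc2
    rw [this, Real.sqrt_one]
  · simp only [f0, symProd_apply']
    simp [Matrix.cons_val_zero, Matrix.cons_val_one]
    field_simp
    linear_combination (-20 : ℝ) * hc2

set_option maxHeartbeats 2000000 in
/-- Structure of minimizers of `f₀` in `M`: the vectors `a, b` with `ε̄ = a ⊙ b` each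
have at most one zero entry, and not in the same component. -/
theorem minimizer_structure (a b : Fin 3 → ℝ)
    (hmem : symProd a b ∈ Mset)
    (hmin : ∀ ε ∈ Mset, f0 (symProd a b) ≤ f0 ε) :
    (∀ i : Fin 3, ¬(a i = 0 ∧ b i = 0)) ∧
      (∀ i j : Fin 3, i ≠ j → ¬(a i = 0 ∧ a j = 0) ∧ ¬(b i = 0 ∧ b j = 0)) := by
  obtain ⟨hsq, -⟩ := hmem
  -- norm-one constraint as an equation
  have hS0 : (0:ℝ) ≤ ∑ i, ∑ j, (symProd a b i j) ^ 2 := by positivity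
  have hsum : (∑ i, ∑ j, (symProd a b i j) ^ 2) = 1 := by
    have h := Real.sq_sqrt hS0
    rw [hsq] at h
    linarith [h]
  have hN : (a 0*b 0)^2 + (a 1*b 1)^2 + (a 2*b 2)^2
      + ((a 0*b 1 + a 1*b 0)^2 + (a 0*b 2 + a 2*b 0)^2 + (a 1*b 2 + a 2*b 1)^2)/2 = 1 := by
    rw [← hsum]
    simp only [Fin.sum_univ_three, symProd_apply']
    ring
  -- the minimizer's value is at most 5/26
  obtain ⟨εw, hw, hval⟩ := witness_bound
  have hle : f0 (symProd a b) ≤ 5/26 := hval ▸ hmin εw hw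
  have hF : ((a 0*b 2 + a 2*b 0) - (a 1*b 2 + a 2*b 1))^2/4
      + ((a 0*b 1 + a 1*b 0) - (a 0*b 2 + a 2*b 0))^2/4
      + ((a 0*b 1 + a 1*b 0) - (a 1*b 2 + a 2*b 1))^2/4
      + (a 0*b 0)^2 + (a 1*b 1)^2 + (a 2*b 2)^2 ≤ 5/26 := by
    refine le_trans (le_of_eq ?_) hle
    simp only [f0, symProd_apply']
    ring
  have hcases : ∀ i : Fin 3, i = 0 ∨ i = 1 ∨ i = 2 := by decide
  constructor
  · rintro i ⟨hai, hbi⟩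
    rcases hcases i with rfl | rfl | rfl <;> rw [hai, hbi] at hN hF <;> nlinarith [hN, hF]
  · intro i j hij
    refine ⟨fun ⟨hi, hj⟩ => ?_, fun ⟨hi, hj⟩ => ?_⟩
    · rcases hcases i with rfl | rfl | rfl <;> rcases hcases j with rfl | rfl | rfl
      · exact absurd rfl hij
      · rw [hi, hj] at hN hF
        nlinarith [hN, hF, sq_nonneg (a 2*b 0 - a 2*b 1), sq_nonneg (a 2*b 2)]
      · rw [hi, hj] at hN hF
        nlinarith [hN, hF, sq_nonneg (a 1*b 0 - a 1*b 2), sq_nonneg (a 1*b 1)]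
      · rw [hi, hj] at hN hF
        nlinarith [hN, hF, sq_nonneg (a 2*b 0 - a 2*b 1), sq_nonneg (a 2*b 2)]
      · exact absurd rfl hij
      · rw [hi, hj] at hN hF
        nlinarith [hN, hF, sq_nonneg (a 0*b 1 - a 0*b 2), sq_nonneg (a 0*b 0)]
      · rw [hi, hj] at hN hF
        nlinarith [hN, hF, sq_nonneg (a 1*b 0 - a 1*b 2), sq_nonneg (a 1*b 1)]
      · rw [hi, hj] at hN hF
        nlinarith [hN, hF, sq_nonneg (a 0*b 1 - a 0*b 2), sq_nonneg (a 0*b 0)]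
      · exact absurd rfl hij
    · rcases hcases i with rfl | rfl | rfl <;> rcases hcases j with rfl | rfl | rfl
      · exact absurd rfl hij
      · rw [hi, hj] at hN hF
        nlinarith [hN, hF, sq_nonneg (a 0*b 2 - a 1*b 2), sq_nonneg (a 2*b 2)]
      · rw [hi, hj] at hN hF
        nlinarith [hN, hF, sq_nonneg (a 0*b 1 - a 2*b 1), sq_nonneg (a 1*b 1)]
      · rw [hi, hj] at hN hF
        nlinarith [hN, hF, sq_nonneg (a 0*b 2 - a 1*b 2), sq_nonneg (a 2*b 2)]
      · exact absurd rfl hij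
      · rw [hi, hj] at hN hF
        nlinarith [hN, hF, sq_nonneg (a 1*b 0 - a 2*b 0), sq_nonneg (a 0*b 0)]
      · rw [hi, hj] at hN hF
        nlinarith [hN, hF, sq_nonneg (a 0*b 1 - a 2*b 1), sq_nonneg (a 1*b 1)]
      · rw [hi, hj] at hN hF
        nlinarith [hN, hF, sq_nonneg (a 1*b 0 - a 2*b 0), sq_nonneg (a 0*b 0)]
      · exact absurd rfl hij
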